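/- Let p > 2 be a real number and let z, w ∈ ℝ^N. Set A := ∫₀¹ D²H(t z + (1 − t) w) dt (entrywise Bochner integral). Then for every ξ ∈ ℝ^N one has 4^{−(p−1)} (|z| + |w|)^{p−2} |ξ|² ≤ ⟨A ξ, ξ⟩ ≤ (p − 1) (|z| + |w|)^{p−2} |ξ|². -/

import Mathlib

/-!
The quadratic form of `D²H(x)` lies between `|x|^{p-2} |ξ|²` and `(p-1) |x|^{p-2} |ξ|²`, the
upper bound by Cauchy–Schwarz on the rank-one part. Along the segment `t z + (1-t) w` one has
`|x| ≤ |z| + |w|`, which gives the upper estimate, and on the quarter of `[0, 1]` next to the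
longer endpoint one has `|x| ≥ (|z| + |w|)/4`, which gives the lower one, since
`(1/4) ((|z| + |w|)/4)^{p-2} = 4^{-(p-1)} (|z| + |w|)^{p-2}`. For `p > 2` the map `D²H` is
continuous (also at `0`), so the integral commutes with the quadratic form.
-/

open MeasureTheory RealInnerProductSpace

open Classical in
noncomputable def D2H {N : ℕ} (p : ℝ) (z : EuclideanSpace ℝ (Fin N)) :
    EuclideanSpace ℝ (Fin N) →L[ℝ] EuclideanSpace ℝ (Fin N) :=
  if z = 0 then 0
  else ‖z‖ ^ (p - 2) • ContinuousLinearMap.id ℝ (EuclideanSpace ℝ (Fin N)) +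
    ((p - 2) * ‖z‖ ^ (p - 4)) • (innerSL ℝ z).smulRight z

lemma rpow_sub_four_mul_sq {x : ℝ} (hx : x ≠ 0) (p : ℝ) : x ^ (p - 4) * x ^ 2 = x ^ (p - 2) := by
  rw [← Real.rpow_add_natCast hx]
  congr 1
  push_cast
  ring

section Segment

variable {F : Type*} [NormedAddCommGroup F] [NormedSpace ℝ F]

lemma norm_smul_add_one_sub_smul_le {t : ℝ} (ht : t ∈ Set.Icc (0 : ℝ) 1) (z w : F) :
    ‖t • z + (1 - t) • w‖ ≤ ‖z‖ + ‖w‖ := by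
  obtain ⟨h0, h1⟩ := ht
  calc ‖t • z + (1 - t) • w‖ ≤ t * ‖z‖ + (1 - t) * ‖w‖ := by
        refine (norm_add_le _ _).trans_eq ?_
        rw [norm_smul_of_nonneg h0, norm_smul_of_nonneg (by linarith)]
    _ ≤ ‖z‖ + ‖w‖ := by nlinarith [norm_nonneg z, norm_nonneg w]

lemma add_div_four_le_norm_smul_add_one_sub_smul {t : ℝ} (ht : t ∈ Set.Icc (3 / 4 : ℝ) 1)
    {z w : F} (hwz : ‖w‖ ≤ ‖z‖) : (‖z‖ + ‖w‖) / 4 ≤ ‖t • z + (1 - t) • w‖ := by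
  obtain ⟨h0, h1⟩ := ht
  have := norm_sub_norm_le (t • z) (-((1 - t) • w))
  rw [sub_neg_eq_add, norm_neg, norm_smul_of_nonneg (by linarith),
    norm_smul_of_nonneg (by linarith)] at this
  nlinarith [norm_nonneg z, norm_nonneg w]

lemma exists_Icc_quarter_add_div_four_le_norm (z w : F) :
    ∃ a, Set.Icc a (a + 1 / 4) ⊆ Set.Icc (0 : ℝ) 1 ∧
      ∀ t ∈ Set.Icc a (a + 1 / 4), (‖z‖ + ‖w‖) / 4 ≤ ‖t • z + (1 - t) • w‖ := by
  rcases le_total ‖w‖ ‖z‖ with hwz | hzw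
  · refine ⟨3 / 4, Set.Icc_subset_Icc (by norm_num) (by norm_num), fun t ht => ?_⟩
    exact add_div_four_le_norm_smul_add_one_sub_smul ⟨ht.1, by linarith [ht.2]⟩ hwz
  · refine ⟨0, Set.Icc_subset_Icc le_rfl (by norm_num), fun t ht => ?_⟩
    have := add_div_four_le_norm_smul_add_one_sub_smul (t := 1 - t)
      ⟨by linarith [ht.2], by linarith [ht.1]⟩ hzw
    rwa [add_comm ‖w‖, sub_sub_cancel, add_comm ((1 - t) • w)] at this

end Segment

lemma inner_integral_apply_self {X F : Type*} [MeasurableSpace X] {μ : Measure X}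
    [NormedAddCommGroup F] [InnerProductSpace ℝ F] [CompleteSpace F] {φ : X → F →L[ℝ] F}
    (hφ : Integrable φ μ) (ξ : F) : ⟪(∫ x, φ x ∂μ) ξ, ξ⟫ = ∫ x, ⟪φ x ξ, ξ⟫ ∂μ := by
  rw [ContinuousLinearMap.integral_apply hφ, real_inner_comm,
    ← integral_inner (hφ.apply_continuousLinearMap ξ)]
  simp_rw [real_inner_comm ξ]

lemma mul_sub_le_setIntegral_of_le_on_Icc {f : ℝ → ℝ} {s : Set ℝ} {a b c : ℝ} (hab : a ≤ b)
    (hs : MeasurableSet s) (hsub : Set.Icc a b ⊆ s) (hf : IntegrableOn f s)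
    (hf0 : ∀ t ∈ s, 0 ≤ f t) (hc : ∀ t ∈ Set.Icc a b, c ≤ f t) :
    c * (b - a) ≤ ∫ t in s, f t :=
  calc c * (b - a) = c * volume.real (Set.Icc a b) := by rw [Real.volume_real_Icc_of_le hab]
    _ ≤ ∫ t in Set.Icc a b, f t :=
      setIntegral_ge_of_const_le_real measurableSet_Icc measure_Icc_lt_top.ne hc (hf.mono_set hsub)
    _ ≤ ∫ t in s, f t :=
      setIntegral_mono_set hf ((ae_restrict_iff' hs).2 (ae_of_all _ hf0)) hsub.eventuallyLE

lemma continuous_innerSL_smulRight {F : Type*} [NormedAddCommGroup F] [InnerProductSpace ℝ F] :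
    Continuous fun z : F => (innerSL ℝ z).smulRight z :=
  (ContinuousLinearMap.smulRightL ℝ F F).continuous₂.comp₂ (innerSL ℝ).continuous continuous_id

section D2H

variable {N : ℕ}
local notation "E" => EuclideanSpace ℝ (Fin N)

@[simp]
lemma D2H_zero (p : ℝ) : D2H p (0 : E) = 0 := if_pos rfl

lemma D2H_of_ne_zero (p : ℝ) {z : E} (hz : z ≠ 0) :
    D2H p z = ‖z‖ ^ (p - 2) • ContinuousLinearMap.id ℝ E +
      ((p - 2) * ‖z‖ ^ (p - 4)) • (innerSL ℝ z).smulRight z :=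
  if_neg hz

lemma D2H_apply_of_ne_zero (p : ℝ) {z : E} (hz : z ≠ 0) (ξ : E) :
    D2H p z ξ = ‖z‖ ^ (p - 2) • ξ + ((p - 2) * ‖z‖ ^ (p - 4) * ⟪z, ξ⟫) • z := by
  rw [D2H_of_ne_zero p hz]
  simp [mul_smul]

lemma norm_D2H_le {p : ℝ} (hp : 2 ≤ p) (z : E) : ‖D2H p z‖ ≤ (p - 1) * ‖z‖ ^ (p - 2) := by
  rcases eq_or_ne z 0 with rfl | hz
  · simp only [D2H_zero, norm_zero]
    exact mul_nonneg (by linarith) (by positivity)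
  · have hp2 : 0 ≤ p - 2 := by linarith
    calc ‖D2H p z‖ ≤ ‖z‖ ^ (p - 2) * 1 + (p - 2) * ‖z‖ ^ (p - 4) * (‖z‖ * ‖z‖) := by
          rw [D2H_of_ne_zero p hz]
          refine (norm_add_le _ _).trans (add_le_add ?_ ?_)
          · rw [norm_smul, Real.norm_of_nonneg (by positivity)]
            gcongr
            exact ContinuousLinearMap.norm_id_le
          · rw [norm_smul, ContinuousLinearMap.norm_smulRight_apply, innerSL_apply_norm,
              Real.norm_of_nonneg (by positivity)]
      _ = (p - 1) * ‖z‖ ^ (p - 2) := by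
          rw [← rpow_sub_four_mul_sq (norm_ne_zero_iff.2 hz) p]
          ring

lemma continuous_D2H {p : ℝ} (hp : 2 < p) : Continuous (D2H (N := N) p) := by
  rw [continuous_iff_continuousAt]
  intro z
  rcases eq_or_ne z 0 with rfl | hz
  · have hbound : ContinuousAt (fun y : E => (p - 1) * ‖y‖ ^ (p - 2)) 0 := by
      fun_prop (disch := right; linarith)
    rw [ContinuousAt, D2H_zero]
    refine squeeze_zero_norm (fun y => norm_D2H_le hp.le y) ?_
    simpa [Real.zero_rpow (by linarith : p - 2 ≠ 0)] using hbound.tendsto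
  · have hz' : ‖z‖ ≠ 0 := norm_ne_zero_iff.2 hz
    have hsmulRight := (continuous_innerSL_smulRight (F := E)).continuousAt (x := z)
    refine ContinuousAt.congr ?_
      ((isOpen_ne.eventually_mem hz).mono fun y hy => (D2H_of_ne_zero p hy).symm)
    fun_prop (disch := left; exact hz')

lemma rpow_mul_sq_le_inner_D2H_apply_self {p : ℝ} (hp : 2 < p) (z ξ : E) :
    ‖z‖ ^ (p - 2) * ‖ξ‖ ^ 2 ≤ ⟪D2H p z ξ, ξ⟫ := by
  rcases eq_or_ne z 0 with rfl | hz
  · simp [Real.zero_rpow (by linarith : p - 2 ≠ 0)]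
  · have hproj : 0 ≤ (p - 2) * ‖z‖ ^ (p - 4) * ⟪z, ξ⟫ * ⟪z, ξ⟫ := by
      rw [mul_assoc]
      exact mul_nonneg (mul_nonneg (by linarith) (by positivity)) (mul_self_nonneg _)
    rw [D2H_apply_of_ne_zero p hz, inner_add_left, real_inner_smul_left, real_inner_smul_left,
      real_inner_self_eq_norm_sq]
    linarith

lemma inner_D2H_apply_self_le {p : ℝ} (hp : 2 ≤ p) (z ξ : E) :
    ⟪D2H p z ξ, ξ⟫ ≤ (p - 1) * ‖z‖ ^ (p - 2) * ‖ξ‖ ^ 2 :=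
  calc ⟪D2H p z ξ, ξ⟫ ≤ ‖D2H p z ξ‖ * ‖ξ‖ := real_inner_le_norm _ _
    _ ≤ ‖D2H p z‖ * ‖ξ‖ * ‖ξ‖ := by gcongr; exact (D2H p z).le_opNorm ξ
    _ ≤ (p - 1) * ‖z‖ ^ (p - 2) * ‖ξ‖ * ‖ξ‖ := by gcongr; exact norm_D2H_le hp z
    _ = (p - 1) * ‖z‖ ^ (p - 2) * ‖ξ‖ ^ 2 := by ring

lemma rpow_mul_sq_le_inner_D2H_apply_self_of_le_norm {p : ℝ} (hp : 2 < p) {r : ℝ} (hr : 0 ≤ r)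
    {z : E} (hrz : r ≤ ‖z‖) (ξ : E) : r ^ (p - 2) * ‖ξ‖ ^ 2 ≤ ⟪D2H p z ξ, ξ⟫ :=
  le_trans (by gcongr) (rpow_mul_sq_le_inner_D2H_apply_self hp z ξ)

lemma inner_D2H_apply_self_le_of_norm_le {p : ℝ} (hp : 2 ≤ p) {R : ℝ} {z : E} (hzR : ‖z‖ ≤ R)
    (ξ : E) : ⟪D2H p z ξ, ξ⟫ ≤ (p - 1) * R ^ (p - 2) * ‖ξ‖ ^ 2 :=
  (inner_D2H_apply_self_le hp z ξ).trans (by gcongr; linarith)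

end D2H

/-- **Estimate (4.5).** Let `p > 2`, `z, w ∈ ℝ^N` and `A := ∫₀¹ D²H(t z + (1 − t) w) dt`.
Then for every `ξ ∈ ℝ^N`,
`4^{−(p−1)} (|z| + |w|)^{p−2} |ξ|² ≤ ⟨A ξ, ξ⟩ ≤ (p − 1) (|z| + |w|)^{p−2} |ξ|²`. -/
theorem D2H_integral_ellipticity (N : ℕ) (p : ℝ) (hp : 2 < p)
    (z w : EuclideanSpace ℝ (Fin N)) :
    ∀ ξ : EuclideanSpace ℝ (Fin N),
      (4 : ℝ) ^ (-(p - 1)) * (‖z‖ + ‖w‖) ^ (p - 2) * ‖ξ‖ ^ 2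
          ≤ ⟪(∫ t in Set.Icc (0:ℝ) 1, D2H p (t • z + (1 - t) • w)) ξ, ξ⟫ ∧
        ⟪(∫ t in Set.Icc (0:ℝ) 1, D2H p (t • z + (1 - t) • w)) ξ, ξ⟫
          ≤ (p - 1) * (‖z‖ + ‖w‖) ^ (p - 2) * ‖ξ‖ ^ 2 := by
  intro ξ
  have hA : Continuous fun t : ℝ => D2H p (t • z + (1 - t) • w) :=
    (continuous_D2H hp).comp (by fun_prop)
  have hq : Continuous fun t : ℝ => ⟪D2H p (t • z + (1 - t) • w) ξ, ξ⟫ := by fun_prop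
  rw [inner_integral_apply_self hA.integrableOn_Icc]
  constructor
  · obtain ⟨a, hsub, hlow⟩ := exists_Icc_quarter_add_div_four_le_norm z w
    have hconst : (4 : ℝ) ^ (-(p - 1)) * (‖z‖ + ‖w‖) ^ (p - 2) * ‖ξ‖ ^ 2 =
        ((‖z‖ + ‖w‖) / 4) ^ (p - 2) * ‖ξ‖ ^ 2 * (a + 1 / 4 - a) := by
      rw [Real.div_rpow (by positivity) (by norm_num), Real.rpow_neg (by norm_num),
        show p - 1 = p - 2 + 1 by ring, Real.rpow_add_one (by norm_num)]
      ring
    rw [hconst]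
    exact mul_sub_le_setIntegral_of_le_on_Icc (by linarith) measurableSet_Icc hsub
      hq.integrableOn_Icc
      (fun t _ => le_trans (by positivity) (rpow_mul_sq_le_inner_D2H_apply_self hp _ ξ))
      fun t ht => rpow_mul_sq_le_inner_D2H_apply_self_of_le_norm hp (by positivity) (hlow t ht) ξ
  · calc ∫ t in Set.Icc (0 : ℝ) 1, ⟪D2H p (t • z + (1 - t) • w) ξ, ξ⟫
        ≤ ∫ _ in Set.Icc (0 : ℝ) 1, (p - 1) * (‖z‖ + ‖w‖) ^ (p - 2) * ‖ξ‖ ^ 2 :=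
          setIntegral_mono_on hq.integrableOn_Icc (integrableOn_const measure_Icc_lt_top.ne)
            measurableSet_Icc fun t ht =>
              inner_D2H_apply_self_le_of_norm_le hp.le (norm_smul_add_one_sub_smul_le ht z w) ξ
      _ = (p - 1) * (‖z‖ + ‖w‖) ^ (p - 2) * ‖ξ‖ ^ 2 := by simp [Real.volume_real_Icc]
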